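/- Let H be a real separable Hilbert space, d ≥ 1, B a ball in H and α > 0. There exists ε > 0 (depending on α) such that for any two d-planes P, P' in H with d_B(P,P') ≤ ε, one has P ∩ (1−α)B ⊆ π_P(P' ∩ B), where π_P denotes the orthogonal projection onto P and (1−α)B is the concentric ball of radius (1−α) times that of B. -/

import Mathlib

open Metric Set MeasureTheory
open scoped ENNReal NNReal Classical

noncomputable section

variable {H : Type*} [NormedAddCommGroup H] [InnerProductSpace ℝ H]

/-- A `d`-plane: a `d`-dimensional affine subspace of `H`. -/
def IsDPlane (d : ℕ) (P : Set H) : Prop :=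
  ∃ (x : H) (W : Submodule ℝ H), Module.finrank ℝ W = d ∧ P = (fun w => x + w) '' (W : Set H)

/-- `d`-dimensional Hausdorff content `𝓗^d_∞`. -/
def hContent (d : ℕ) (A : Set H) : ℝ≥0∞ :=
  ⨅ (t : ℕ → Set H) (_ : A ⊆ ⋃ n, t n), ∑' n, EMetric.diam (t n) ^ (d : ℝ)

/-- Normalized local Hausdorff distance between `E` and `F` relative to the ball `B(x,r)`. -/
def dBall (x : H) (r : ℝ) (E F : Set H) : ℝ :=
  r⁻¹ * max (⨆ y ∈ E ∩ closedBall x r, infDist y F) (⨆ y ∈ F ∩ closedBall x r, infDist y E)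

/-- `β_E^{d,p}(B(x,r), P)`. -/
def betaPl (d : ℕ) (p : ℝ) (E : Set H) (x : H) (r : ℝ) (P : Set H) : ℝ≥0∞ :=
  ((ENNReal.ofReal r ^ d)⁻¹ *
      ∫⁻ t in Ioo (0 : ℝ) 1,
        hContent d {y | y ∈ E ∩ closedBall x r ∧ t * r < infDist y P} *
          ENNReal.ofReal (t ^ (p - 1))) ^ (1 / p)

/-- `β_E^{d,p}(B(x,r))`: infimum of `β_E^{d,p}(B(x,r), P)` over all `d`-planes `P`. -/
def betaInf (d : ℕ) (p : ℝ) (E : Set H) (x : H) (r : ℝ) : ℝ≥0∞ :=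
  ⨅ (P : Set H) (_ : IsDPlane d P), betaPl d p E x r P

/-- Choquet integral of `f` over `A` against the Hausdorff content `𝓗^d_∞`. -/
def choquet (d : ℕ) (A : Set H) (f : H → ℝ) : ℝ≥0∞ :=
  ∫⁻ t in Ioi (0 : ℝ), hContent d {x | x ∈ A ∧ t < f x}

/-- Choquet integral of `f^p` over `A` against the Hausdorff content `𝓗^d_∞`. -/
def choquetPow (d : ℕ) (p : ℝ) (A : Set H) (f : H → ℝ) : ℝ≥0∞ :=
  ∫⁻ t in Ioi (0 : ℝ), hContent d {x | x ∈ A ∧ t < f x} * ENNReal.ofReal (t ^ (p - 1))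

/-- A Christ–David cube system for `E ⊆ H`, with parameters `c₀, ρ ∈ (0,1)`. A cube
`Q ∈ cubes k` has side length `ℓ(Q) = 5ρᵏ` and centre `center k Q`. -/
structure ChristDavid (E : Set H) where
  c₀ : ℝ
  ρ : ℝ
  c₀_pos : 0 < c₀
  c₀_lt_one : c₀ < 1
  ρ_pos : 0 < ρ
  ρ_lt_one : ρ < 1
  cubes : ℤ → Set (Set H)
  center : ℤ → Set H → H
  subset_E : ∀ k Q, Q ∈ cubes k → Q ⊆ E
  nested : ∀ k l Q R, Q ∈ cubes k → R ∈ cubes l → (Q ∩ R).Nonempty → Q ⊆ R ∨ R ⊆ Q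
  center_mem : ∀ k Q, Q ∈ cubes k → center k Q ∈ E
  ball_subset : ∀ k Q, Q ∈ cubes k →
    E ∩ closedBall (center k Q) (c₀ * (5 * ρ ^ k)) ⊆ Q
  subset_ball : ∀ k Q, Q ∈ cubes k → Q ⊆ closedBall (center k Q) (5 * ρ ^ k)
  covers : ∀ k, E ⊆ ⋃ Q ∈ cubes k, closedBall (center k Q) (5 * ρ ^ k)

namespace ChristDavid

variable {E : Set H}

/-- Sum of a quantity over all cubes of a Christ–David cube system. -/
def sumCubes (D : ChristDavid E) (F : ℤ → Set H → ℝ≥0∞) : ℝ≥0∞ :=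
  ∑' (k : ℤ), ∑' (Q : D.cubes k), F k (Q : Set H)

/-- `Q ∈ BWGL(A, ε)`: the set `E` is `ε`-far from every `d`-plane in `A B_Q`. -/
def inBWGL (D : ChristDavid E) (d : ℕ) (A ε : ℝ) (k : ℤ) (Q : Set H) : Prop :=
  ∀ P : Set H, IsDPlane d P → ε ≤ dBall (D.center k Q) (A * (5 * D.ρ ^ k)) E P

/-- `BWGL(Q₀, A, ε) = Σ { ℓ(R)^d : R ⊆ Q₀, R ∈ BWGL(A,ε) }`. -/
def bwglSum (D : ChristDavid E) (d : ℕ) (A ε : ℝ) (Q₀ : Set H) : ℝ≥0∞ :=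
  D.sumCubes fun k Q =>
    if Q ⊆ Q₀ ∧ D.inBWGL d A ε k Q then ENNReal.ofReal (5 * D.ρ ^ k) ^ d else 0

/-- `Σ_{Q ⊆ Q₀} β_E^{d,p}(C₀ B_Q)² ℓ(Q)^d`. -/
def betaSum (D : ChristDavid E) (d : ℕ) (p C₀ : ℝ) (Q₀ : Set H) : ℝ≥0∞ :=
  D.sumCubes fun k Q =>
    if Q ⊆ Q₀ then
      betaInf d p E (D.center k Q) (C₀ * (5 * D.ρ ^ k)) ^ 2 *
        ENNReal.ofReal (5 * D.ρ ^ k) ^ d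
    else 0

/-- `E` satisfies the bilateral weak geometric lemma. -/
def SatisfiesBWGL (D : ChristDavid E) (d : ℕ) : Prop :=
  ∀ A ε : ℝ, 1 ≤ A → 0 < ε → ∃ C : ℝ, 0 < C ∧
    ∀ (k₀ : ℤ), ∀ Q₀ ∈ D.cubes k₀,
      D.bwglSum d A ε Q₀ ≤ ENNReal.ofReal C * ENNReal.ofReal (5 * D.ρ ^ k₀) ^ d

end ChristDavid

/-- Lower content `d`-regularity with constant `c`. -/
def LowerContentRegular (d : ℕ) (c : ℝ) (E : Set H) : Prop :=
  ∀ x ∈ E, ∀ r : ℝ, 0 < r → ENNReal.ofReal r < EMetric.diam E →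
    ENNReal.ofReal (c * r ^ d) ≤ hContent d (E ∩ closedBall x r)

/-- Ahlfors `d`-regularity with constant `A₀`. -/
def AhlforsRegular [MeasurableSpace H] [BorelSpace H] (d : ℕ) (A₀ : ℝ) (E : Set H) : Prop :=
  ∀ x ∈ E, ∀ r : ℝ, 0 < r → ENNReal.ofReal r < EMetric.diam E →
    ENNReal.ofReal (r ^ d / A₀) ≤ μH[(d : ℝ)] (E ∩ closedBall x r) ∧
      μH[(d : ℝ)] (E ∩ closedBall x r) ≤ ENNReal.ofReal (A₀ * r ^ d)

/-- Uniform `d`-rectifiability: Ahlfors `d`-regularity together with big pieces of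
Lipschitz images of `ℝ^d`. -/
def UniformlyRectifiable [MeasurableSpace H] [BorelSpace H] (d : ℕ) (E : Set H) : Prop :=
  (∃ A₀ : ℝ, 1 ≤ A₀ ∧ AhlforsRegular d A₀ E) ∧
    ∃ L θ : ℝ, 0 < L ∧ 0 < θ ∧
      ∀ x ∈ E, ∀ r : ℝ, 0 < r → ENNReal.ofReal r < EMetric.diam E →
        ∃ f : EuclideanSpace ℝ (Fin d) → H,
          LipschitzWith (Real.toNNReal L) f ∧
            ENNReal.ofReal (θ * r ^ d) ≤
              μH[(d : ℝ)] (E ∩ closedBall x r ∩ f '' closedBall 0 r)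

/-- `(ε, d, δ₀)`-Reifenberg flatness. -/
def ReifenbergFlat (ε : ℝ) (d : ℕ) (δ₀ : ℝ) (E : Set H) : Prop :=
  ∀ x ∈ E, ∀ r : ℝ, 0 < r → r < δ₀ →
    ∃ P : Set H, IsDPlane d P ∧ dBall x r E P ≤ ε

end

section Aux

variable {H : Type*} [NormedAddCommGroup H] [InnerProductSpace ℝ H]

/-- Pythagoras: orthogonal projection minimizes distance. -/
lemma aux_projNearest {W : Submodule ℝ H} [Submodule.HasOrthogonalProjection W] (y u : H) (hu : u ∈ W) :
    ‖y - Submodule.orthogonalProjectionOnto W y‖ ≤ ‖y - u‖ := by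
  have h1 : y - (Submodule.orthogonalProjectionOnto W y : H) ∈ Wᗮ := by exact W.sub_starProjection_mem_orthogonal y
  have h2 : ((Submodule.orthogonalProjectionOnto W y : H) - u) ∈ W := W.sub_mem (Submodule.orthogonalProjectionOnto W y).2 hu
  have hinner : (inner ℝ (y - (Submodule.orthogonalProjectionOnto W y : H))
      ((Submodule.orthogonalProjectionOnto W y : H) - u) : ℝ) = 0 := by
    rw [real_inner_comm]; exact h1 _ h2
  have key : ‖y - u‖ ^ 2 = ‖y - (Submodule.orthogonalProjectionOnto W y : H)‖ ^ 2 +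
      ‖(Submodule.orthogonalProjectionOnto W y : H) - u‖ ^ 2 := by
    have := norm_add_sq_real (y - (Submodule.orthogonalProjectionOnto W y : H))
      ((Submodule.orthogonalProjectionOnto W y : H) - u)
    rw [hinner] at this
    simpa using this
  nlinarith [norm_nonneg (y - (Submodule.orthogonalProjectionOnto W y : H)), norm_nonneg (y - u),
    norm_nonneg ((Submodule.orthogonalProjectionOnto W y : H) - u)]

/-- The affine projection `q ↦ x + proj_W (q - x)` minimizes distance to the plane `x + W`. -/
lemma aux_planeNearest {W : Submodule ℝ H} [Submodule.HasOrthogonalProjection W] (x q w : H)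
    (hw : w ∈ (fun u => x + u) '' (W : Set H)) :
    dist q (x + (Submodule.orthogonalProjectionOnto W (q - x) : H)) ≤ dist q w := by
  obtain ⟨u, hu, rfl⟩ := hw
  rw [dist_eq_norm, dist_eq_norm]
  have h1 : q - (x + (Submodule.orthogonalProjectionOnto W (q - x) : H))
      = (q - x) - Submodule.orthogonalProjectionOnto W (q - x) := by abel
  have h2 : q - (x + u) = (q - x) - u := by abel
  rw [h1, h2]
  exact aux_projNearest (q - x) u hu

/-- Extract a pointwise bound from a bounded sup of `infDist` over `E ∩ B̄(x₀,r)`. -/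
lemma aux_pointwise {E F : Set H} {x₀ : H} {r C : ℝ} (hr : 0 ≤ r)
    (h : (⨆ y ∈ E ∩ closedBall x₀ r, infDist y F) ≤ C) :
    ∀ y ∈ E ∩ closedBall x₀ r, infDist y F ≤ C := by
  intro y hy
  have hM : ∀ y' ∈ E ∩ closedBall x₀ r, infDist y' F ≤ infDist x₀ F + r := by
    intro y' hy'
    have h1 : infDist y' F ≤ infDist x₀ F + dist y' x₀ := infDist_le_infDist_add_dist
    have h2 : dist y' x₀ ≤ r := hy'.2
    linarith
  have hbdd : BddAbove (range fun y' => ⨆ _ : y' ∈ E ∩ closedBall x₀ r, infDist y' F) := by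
    refine ⟨infDist x₀ F + r, ?_⟩
    rintro _ ⟨y', rfl⟩
    exact Real.iSup_le (fun h' => hM y' h') (add_nonneg infDist_nonneg hr)
  calc infDist y F = ⨆ _ : y ∈ E ∩ closedBall x₀ r, infDist y F := by
        haveI : Nonempty (y ∈ E ∩ closedBall x₀ r) := ⟨hy⟩
        rw [ciSup_const]
    _ ≤ ⨆ y' ∈ E ∩ closedBall x₀ r, infDist y' F := le_ciSup hbdd y
    _ ≤ C := h

end Aux

set_option maxHeartbeats 1600000 in
/-- **Lemma A.3.** Let `B = B(x₀,r)` be a ball and `α > 0`. There exists `ε > 0`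
(depending on `α`) such that whenever `P, P'` are `d`-planes with `d_B(P,P') ≤ ε`, one has
`P ∩ (1−α)B ⊆ π_P(P' ∩ B)`: every `z ∈ P ∩ (1−α)B` is the nearest point of `P` to some
`y ∈ P' ∩ B`. -/
theorem plane_projection_covers
    {H : Type*} [NormedAddCommGroup H] [InnerProductSpace ℝ H]
    [CompleteSpace H] [TopologicalSpace.SeparableSpace H]
    (d : ℕ) (hd : 1 ≤ d) (α : ℝ) (hα : 0 < α) :
    ∃ ε : ℝ, 0 < ε ∧
      ∀ (x₀ : H) (r : ℝ), 0 < r →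
      ∀ P P' : Set H, IsDPlane d P → IsDPlane d P' →
        dBall x₀ r P P' ≤ ε →
        ∀ z ∈ P ∩ closedBall x₀ ((1 - α) * r),
          ∃ y ∈ P' ∩ closedBall x₀ r, ∀ w ∈ P, dist y z ≤ dist y w := by
  obtain ⟨β, hβdef⟩ : ∃ b : ℝ, b = min α 1 := ⟨_, rfl⟩
  have hβ0 : 0 < β := hβdef ▸ lt_min hα one_pos
  have hβ1 : β ≤ 1 := hβdef ▸ min_le_right _ _
  have hβα : β ≤ α := hβdef ▸ min_le_left _ _
  refine ⟨β / 100, by positivity, ?_⟩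
  obtain ⟨ε, hεdef⟩ : ∃ e : ℝ, e = β / 100 := ⟨_, rfl⟩
  intro x₀ r hr P P' hP hP' hdist z hz
  rw [← hεdef] at hdist
  obtain ⟨hzP, hzB⟩ := hz
  rw [mem_closedBall] at hzB
  obtain ⟨x, W, hWrank, hPeq⟩ := hP
  obtain ⟨x', W', hWrank', hPeq'⟩ := hP'
  haveI : FiniteDimensional ℝ W := Module.finite_of_finrank_pos (by rw [hWrank]; omega)
  haveI : FiniteDimensional ℝ W' := Module.finite_of_finrank_pos (by rw [hWrank']; omega)
  have hεr : 0 < ε * r := by rw [hεdef]; positivity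
  -- extract pointwise bounds from dBall
  have hmax : max (⨆ y ∈ P ∩ closedBall x₀ r, infDist y P')
      (⨆ y ∈ P' ∩ closedBall x₀ r, infDist y P) ≤ ε * r := by
    rw [dBall, inv_mul_le_iff₀ hr] at hdist
    rw [mul_comm]
    exact hdist
  have hS1 : ∀ y ∈ P ∩ closedBall x₀ r, infDist y P' ≤ ε * r :=
    aux_pointwise hr.le (le_trans (le_max_left _ _) hmax)
  have hS2 : ∀ y ∈ P' ∩ closedBall x₀ r, infDist y P ≤ ε * r :=
    aux_pointwise hr.le (le_trans (le_max_right _ _) hmax)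
  -- basic facts about P and the projection π onto P
  have hPne : P.Nonempty := ⟨z, hzP⟩
  have hπmem : ∀ q : H, x + (Submodule.orthogonalProjectionOnto W (q - x) : H) ∈ P := by
    intro q
    rw [hPeq]
    exact ⟨_, (Submodule.orthogonalProjectionOnto W (q - x)).2, rfl⟩
  have hπnear : ∀ q w : H, w ∈ P →
      dist q (x + (Submodule.orthogonalProjectionOnto W (q - x) : H)) ≤ dist q w := by
    intro q w hw
    exact aux_planeNearest x q w (hPeq ▸ hw)
  have hπinf : ∀ q : H, dist q (x + (Submodule.orthogonalProjectionOnto W (q - x) : H)) ≤ infDist q P := by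
    intro q
    haveI : Nonempty P := hPne.to_subtype
    rw [infDist_eq_iInf]
    exact le_ciInf fun w => hπnear q w w.2
  -- nearest point a of z on P'
  obtain ⟨a, ha_def⟩ : ∃ a : H, a = x' + (Submodule.orthogonalProjectionOnto W' (z - x') : H) := ⟨_, rfl⟩
  have haP' : a ∈ P' := by
    rw [hPeq', ha_def]
    exact ⟨_, (Submodule.orthogonalProjectionOnto W' (z - x')).2, rfl⟩
  have hza : dist z a ≤ ε * r := by
    have h1 : dist z a ≤ infDist z P' := by
      haveI : Nonempty P' := ⟨⟨a, haP'⟩⟩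
      rw [infDist_eq_iInf, ha_def]
      exact le_ciInf fun w => aux_planeNearest x' z w (hPeq' ▸ w.2)
    refine h1.trans (hS1 z ⟨hzP, ?_⟩)
    rw [mem_closedBall]
    nlinarith
  have hzB' : dist z x₀ ≤ (1 - β) * r := by nlinarith
  have haB : dist a x₀ ≤ (1 - β) * r + ε * r := by
    calc dist a x₀ ≤ dist a z + dist z x₀ := dist_triangle _ _ _
    _ ≤ ε * r + (1 - β) * r := by rw [dist_comm a z]; linarith
    _ = (1 - β) * r + ε * r := by ring
  -- the key linear estimate
  have key : ∀ v : W', ‖(Submodule.orthogonalProjectionOnto W (v : H) : H) - v‖ ≤ (1 / 25) * ‖(v : H)‖ := by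
    intro v
    rcases eq_or_ne (v : H) 0 with h0 | h0
    · simp [h0]
    have hvn : 0 < ‖(v : H)‖ := norm_pos_iff.mpr h0
    obtain ⟨t, ht_def⟩ : ∃ t : ℝ, t = (β * r / 2) / ‖(v : H)‖ := ⟨_, rfl⟩
    have ht : 0 < t := by rw [ht_def]; positivity
    have hv₁ : ‖t • (v : H)‖ = β * r / 2 := by
      rw [norm_smul, Real.norm_eq_abs, abs_of_pos ht, ht_def]
      field_simp
    -- a and a + t • v are in P' ∩ B
    have haB2 : a ∈ P' ∩ closedBall x₀ r := by
      refine ⟨haP', mem_closedBall.mpr ?_⟩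
      nlinarith
    have hav : a + t • (v : H) ∈ P' ∩ closedBall x₀ r := by
      constructor
      · rw [hPeq']
        refine ⟨Submodule.orthogonalProjectionOnto W' (z - x') + t • v, ?_, ?_⟩
        · exact W'.add_mem (Submodule.orthogonalProjectionOnto W' (z - x')).2 (W'.smul_mem t v.2)
        · rw [ha_def, add_assoc]
      · rw [mem_closedBall]
        calc dist (a + t • (v : H)) x₀ ≤ dist (a + t • (v : H)) a + dist a x₀ :=
              dist_triangle _ _ _
        _ ≤ β * r / 2 + ((1 - β) * r + ε * r) := by
            rw [dist_eq_norm, add_sub_cancel_left, hv₁]; linarith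
        _ ≤ r := by nlinarith
    -- both are within ε r of P
    have hd1 : dist a (x + (Submodule.orthogonalProjectionOnto W (a - x) : H)) ≤ ε * r :=
      (hπinf a).trans (hS2 a haB2)
    have hd2 : dist (a + t • (v : H))
        (x + (Submodule.orthogonalProjectionOnto W (a + t • (v : H) - x) : H)) ≤ ε * r :=
      (hπinf _).trans (hS2 _ hav)
    -- difference of projections
    have hproj : (Submodule.orthogonalProjectionOnto W (a + t • (v : H) - x) : H)
        = (Submodule.orthogonalProjectionOnto W (a - x) : H) + (Submodule.orthogonalProjectionOnto W (t • (v : H)) : H) := by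
      have : a + t • (v : H) - x = (a - x) + t • (v : H) := by abel
      rw [this, map_add]
      push_cast
      ring
    have hbound : ‖(Submodule.orthogonalProjectionOnto W (t • (v : H)) : H) - t • (v : H)‖ ≤ 2 * (ε * r) := by
      have heq : (Submodule.orthogonalProjectionOnto W (t • (v : H)) : H) - t • (v : H)
          = ((x + (Submodule.orthogonalProjectionOnto W (a + t • (v : H) - x) : H)) - (a + t • (v : H)))
            - ((x + (Submodule.orthogonalProjectionOnto W (a - x) : H)) - a) := by
        rw [hproj]; abel
      rw [heq]
      calc _ ≤ ‖(x + (Submodule.orthogonalProjectionOnto W (a + t • (v : H) - x) : H)) - (a + t • (v : H))‖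
            + ‖(x + (Submodule.orthogonalProjectionOnto W (a - x) : H)) - a‖ := norm_sub_le _ _
      _ ≤ ε * r + ε * r := by
          rw [← dist_eq_norm', ← dist_eq_norm']
          exact add_le_add hd2 hd1
      _ = 2 * (ε * r) := by ring
    -- rescale
    have hsmul : (Submodule.orthogonalProjectionOnto W (t • (v : H)) : H) - t • (v : H)
        = t • ((Submodule.orthogonalProjectionOnto W (v : H) : H) - (v : H)) := by
      rw [_root_.map_smul]
      push_cast
      rw [smul_sub]
    rw [hsmul, norm_smul, Real.norm_eq_abs, abs_of_pos ht] at hbound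
    have ht25 : t * ((1 / 25) * ‖(v : H)‖) = 2 * (ε * r) := by
      rw [ht_def, hεdef]
      have hv' : ‖(v : H)‖ ≠ 0 := ne_of_gt hvn
      field_simp
      ring
    exact le_of_mul_le_mul_left (by linarith [hbound]) ht
  -- the linear map L : W' → W is bijective
  obtain ⟨L, hL_def⟩ : ∃ L : W' →ₗ[ℝ] W,
      L = (Submodule.orthogonalProjectionOnto W).toLinearMap.comp W'.subtype := ⟨_, rfl⟩
  have hLcoe : ∀ v : W', ((L v : H)) = (Submodule.orthogonalProjectionOnto W (v : H) : H) := fun v => by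
    rw [hL_def]; rfl
  have hLlower : ∀ v : W', (24 / 25) * ‖(v : H)‖ ≤ ‖(L v : H)‖ := by
    intro v
    have h1 := key v
    have h2 : ‖(v : H)‖ ≤ ‖(L v : H)‖ + ‖(Submodule.orthogonalProjectionOnto W (v : H) : H) - v‖ := by
      rw [hLcoe]
      calc ‖(v : H)‖ = ‖(Submodule.orthogonalProjectionOnto W (v : H) : H)
          - ((Submodule.orthogonalProjectionOnto W (v : H) : H) - v)‖ := by rw [sub_sub_cancel]
      _ ≤ _ := norm_sub_le _ _
    linarith
  have hinj : Function.Injective L := by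
    rw [← LinearMap.ker_eq_bot, Submodule.eq_bot_iff]
    intro v hv
    rw [LinearMap.mem_ker] at hv
    have h1 := hLlower v
    rw [hv] at h1
    simp only [Submodule.coe_zero, norm_zero] at h1
    have : ‖(v : H)‖ = 0 := le_antisymm (by linarith) (norm_nonneg _)
    exact Subtype.ext (norm_eq_zero.mp this)
  have hsurj : Function.Surjective L :=
    (LinearMap.injective_iff_surjective_of_finrank_eq_finrank
      (by rw [hWrank', hWrank])).mp hinj
  -- target point: z - π a ∈ W
  obtain ⟨pa, hpa_def⟩ : ∃ p : H, p = x + (Submodule.orthogonalProjectionOnto W (a - x) : H) := ⟨_, rfl⟩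
  have hzW : z - x ∈ W := by
    rw [hPeq] at hzP
    obtain ⟨u, hu, rfl⟩ := hzP
    simpa using hu
  have htarget : z - pa ∈ W := by
    have : z - pa = (z - x) - (Submodule.orthogonalProjectionOnto W (a - x) : H) := by
      rw [hpa_def]; abel
    rw [this]
    exact W.sub_mem hzW (Submodule.orthogonalProjectionOnto W (a - x)).2
  obtain ⟨v, hv⟩ := hsurj ⟨z - pa, htarget⟩
  have hvproj : (Submodule.orthogonalProjectionOnto W (v : H) : H) = z - pa := by
    rw [← hLcoe, hv]
  -- bound on ‖v‖
  have hpa_bound : ‖z - pa‖ ≤ 2 * (ε * r) := by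
    have h1 : dist a pa ≤ ε * r := by
      rw [hpa_def]
      exact (hπinf a).trans (hS2 a ⟨haP', mem_closedBall.mpr (by nlinarith)⟩)
    calc ‖z - pa‖ ≤ ‖z - a‖ + ‖a - pa‖ := by
          rw [show z - pa = (z - a) + (a - pa) by abel]; exact norm_add_le _ _
    _ ≤ ε * r + ε * r := by
        rw [← dist_eq_norm, ← dist_eq_norm]
        exact add_le_add hza h1
    _ = 2 * (ε * r) := by ring
  have hvbound : ‖(v : H)‖ ≤ 3 * (ε * r) := by
    have h1 := hLlower v
    have h2 : ‖(L v : H)‖ ≤ 2 * (ε * r) := by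
      rw [hv]; exact hpa_bound
    nlinarith
  -- the point y
  refine ⟨a + (v : H), ⟨?_, ?_⟩, ?_⟩
  · rw [hPeq']
    refine ⟨Submodule.orthogonalProjectionOnto W' (z - x') + v, ?_, ?_⟩
    · exact W'.add_mem (Submodule.orthogonalProjectionOnto W' (z - x')).2 v.2
    · rw [ha_def, add_assoc]
  · rw [mem_closedBall]
    calc dist (a + (v : H)) x₀ ≤ dist (a + (v : H)) a + dist a x₀ := dist_triangle _ _ _
    _ ≤ 3 * (ε * r) + ((1 - β) * r + ε * r) := by
        rw [dist_eq_norm, add_sub_cancel_left]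
        exact add_le_add hvbound haB
    _ ≤ r := by nlinarith
  · intro w hw
    have hπy : x + (Submodule.orthogonalProjectionOnto W (a + (v : H) - x) : H) = z := by
      have h1 : a + (v : H) - x = (a - x) + (v : H) := by abel
      rw [h1, map_add]
      push_cast
      rw [hvproj, hpa_def]
      abel
    have := hπnear (a + (v : H)) w hw
    rwa [hπy] at this
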